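/- If Y = G ×₁ U ×₂ V ×₃ W with W ∈ ℝ^{K×R₃} full column rank and P_M ∈ ℝ^{K_M×K} with rank(P_M W) = R₃, then the multilinear rank of Y_M = Y ×₃ P_M equals the multilinear rank of Y, and Y = Y_M ×₃ (W (P_M W)⁺). -/

import Mathlib

open Matrix
open scoped Kronecker

/-- Mode-1 contraction of a third-order tensor with a matrix. -/
def contract1 {I I' J K : ℕ} (P : Matrix (Fin I') (Fin I) ℝ)
    (Y : Fin I → Fin J → Fin K → ℝ) : Fin I' → Fin J → Fin K → ℝ :=
  fun i j k => ∑ l, P i l * Y l j k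

/-- Mode-2 contraction of a third-order tensor with a matrix. -/
def contract2 {I J J' K : ℕ} (P : Matrix (Fin J') (Fin J) ℝ)
    (Y : Fin I → Fin J → Fin K → ℝ) : Fin I → Fin J' → Fin K → ℝ :=
  fun i j k => ∑ l, P j l * Y i l k

/-- Mode-3 contraction of a third-order tensor with a matrix. -/
def contract3 {I J K K' : ℕ} (P : Matrix (Fin K') (Fin K) ℝ)
    (Y : Fin I → Fin J → Fin K → ℝ) : Fin I → Fin J → Fin K' → ℝ :=
  fun i j k => ∑ l, P k l * Y i j l

/-- Tucker (multilinear) product of a core tensor with three factor matrices. -/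
def tucker {I J K R₁ R₂ R₃ : ℕ} (G : Fin R₁ → Fin R₂ → Fin R₃ → ℝ)
    (U : Matrix (Fin I) (Fin R₁) ℝ) (V : Matrix (Fin J) (Fin R₂) ℝ)
    (W : Matrix (Fin K) (Fin R₃) ℝ) : Fin I → Fin J → Fin K → ℝ :=
  fun i j k => ∑ p, ∑ q, ∑ r, G p q r * U i p * V j q * W k r

/-- First (mode-1) unfolding, column-major: row index (k,j) with j fastest. -/
def unfold1 {I J K : ℕ} (Y : Fin I → Fin J → Fin K → ℝ) :
    Matrix (Fin K × Fin J) (Fin I) ℝ := fun p i => Y i p.2 p.1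

/-- Second (mode-2) unfolding. -/
def unfold2 {I J K : ℕ} (Y : Fin I → Fin J → Fin K → ℝ) :
    Matrix (Fin K × Fin I) (Fin J) ℝ := fun p j => Y p.2 j p.1

/-- Third (mode-3) unfolding. -/
def unfold3 {I J K : ℕ} (Y : Fin I → Fin J → Fin K → ℝ) :
    Matrix (Fin J × Fin I) (Fin K) ℝ := fun p k => Y p.2 p.1 k

/-- The tensor has multilinear rank at most (R₁,R₂,R₃). -/
def mlrankLE {I J K : ℕ} (Y : Fin I → Fin J → Fin K → ℝ) (R₁ R₂ R₃ : ℕ) : Prop :=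
  ∃ (G : Fin R₁ → Fin R₂ → Fin R₃ → ℝ) (U : Matrix (Fin I) (Fin R₁) ℝ)
    (V : Matrix (Fin J) (Fin R₂) ℝ) (W : Matrix (Fin K) (Fin R₃) ℝ),
    Y = tucker G U V W

/-- Frobenius norm of a third-order tensor. -/
noncomputable def frob {I J K : ℕ} (Y : Fin I → Fin J → Fin K → ℝ) : ℝ :=
  Real.sqrt (∑ i, ∑ j, ∑ k, (Y i j k) ^ 2)

/-- `X` is the Moore–Penrose pseudoinverse of `A` (the four Penrose conditions). -/
def IsMPInv {m n : Type*} [Fintype m] [Fintype n] (A : Matrix m n ℝ)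
    (X : Matrix n m ℝ) : Prop :=
  A * X * A = A ∧ X * A * X = X ∧ (A * X)ᵀ = A * X ∧ (X * A)ᵀ = X * A

/-- Polyadic (CP) combination of factor matrices. -/
def cp {I J K F : ℕ} (A : Matrix (Fin I) (Fin F) ℝ) (B : Matrix (Fin J) (Fin F) ℝ)
    (C : Matrix (Fin K) (Fin F) ℝ) : Fin I → Fin J → Fin K → ℝ :=
  fun i j k => ∑ r, A i r * B j r * C k r

/-- Khatri–Rao (columnwise Kronecker) product. -/
def khatriRao {n m F : ℕ} (N : Matrix (Fin n) (Fin F) ℝ) (M : Matrix (Fin m) (Fin F) ℝ) :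
    Matrix (Fin n × Fin m) (Fin F) ℝ := fun p r => N p.1 r * M p.2 r

/-
Since `P_M W` has full column rank, the Penrose identity `(P_M W) Q (P_M W) = P_M W` cancels to
`Q (P_M W) = 1`. Hence contracting `Y_M = Y ×₃ P_M` with `W Q` turns the third factor
`P_M W` back into `W`, recovering `Y`. A mode-3 contraction multiplies every unfolding by a matrix
(a Kronecker factor `A ⊗ 1` on the left for modes 1 and 2, `Aᵀ` on the right for mode 3), so it
cannot increase their ranks; as `Y` and `Y_M` are contractions of each other, the ranks agree.
-/

theorem Matrix.mul_eq_one_of_mul_mul_self_eq {m n K : Type*} [Fintype m] [Fintype n]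
    [DecidableEq n] [Field K] {A : Matrix m n K} {Q : Matrix n m K}
    (hA : A.rank = Fintype.card n) (h : A * Q * A = A) : Q * A = 1 := by
  have hinj : Function.Injective A.mulVec := by
    rw [mulVec_injective_iff, linearIndependent_iff_card_eq_finrank_span, ← hA,
      rank_eq_finrank_span_cols, Set.finrank]
  refine ext_of_mulVec_single fun j => hinj ?_
  rw [mulVec_mulVec, ← Matrix.mul_assoc, h, one_mulVec]

section Contraction

variable {I J K K' : ℕ}

lemma unfold1_contract3 (A : Matrix (Fin K') (Fin K) ℝ) (Y : Fin I → Fin J → Fin K → ℝ) :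
    unfold1 (contract3 A Y) = (A ⊗ₖ (1 : Matrix (Fin J) (Fin J) ℝ)) * unfold1 Y := by
  ext p i
  simp [unfold1, contract3, mul_apply, Fintype.sum_prod_type, one_apply, mul_comm]

lemma unfold2_contract3 (A : Matrix (Fin K') (Fin K) ℝ) (Y : Fin I → Fin J → Fin K → ℝ) :
    unfold2 (contract3 A Y) = (A ⊗ₖ (1 : Matrix (Fin I) (Fin I) ℝ)) * unfold2 Y := by
  ext p j
  simp [unfold2, contract3, mul_apply, Fintype.sum_prod_type, one_apply, mul_comm]

lemma unfold3_contract3 (A : Matrix (Fin K') (Fin K) ℝ) (Y : Fin I → Fin J → Fin K → ℝ) :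
    unfold3 (contract3 A Y) = unfold3 Y * Aᵀ := by
  ext p k
  simp [unfold3, contract3, mul_apply, mul_comm]

lemma rank_unfold1_contract3_le (A : Matrix (Fin K') (Fin K) ℝ)
    (Y : Fin I → Fin J → Fin K → ℝ) : (unfold1 (contract3 A Y)).rank ≤ (unfold1 Y).rank := by
  rw [unfold1_contract3]
  exact rank_mul_le_right _ _

lemma rank_unfold2_contract3_le (A : Matrix (Fin K') (Fin K) ℝ)
    (Y : Fin I → Fin J → Fin K → ℝ) : (unfold2 (contract3 A Y)).rank ≤ (unfold2 Y).rank := by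
  rw [unfold2_contract3]
  exact rank_mul_le_right _ _

lemma rank_unfold3_contract3_le (A : Matrix (Fin K') (Fin K) ℝ)
    (Y : Fin I → Fin J → Fin K → ℝ) : (unfold3 (contract3 A Y)).rank ≤ (unfold3 Y).rank := by
  rw [unfold3_contract3]
  exact rank_mul_le_left _ _

lemma rank_unfold_contract3_eq_of_contract3_contract3_eq {A : Matrix (Fin K') (Fin K) ℝ}
    {B : Matrix (Fin K) (Fin K') ℝ} {Y : Fin I → Fin J → Fin K → ℝ}
    (hBA : contract3 B (contract3 A Y) = Y) :
    (unfold1 (contract3 A Y)).rank = (unfold1 Y).rank ∧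
    (unfold2 (contract3 A Y)).rank = (unfold2 Y).rank ∧
    (unfold3 (contract3 A Y)).rank = (unfold3 Y).rank := by
  refine ⟨(rank_unfold1_contract3_le A Y).antisymm ?_,
    (rank_unfold2_contract3_le A Y).antisymm ?_, (rank_unfold3_contract3_le A Y).antisymm ?_⟩
  all_goals
    conv_lhs => rw [← hBA]
  · exact rank_unfold1_contract3_le B _
  · exact rank_unfold2_contract3_le B _
  · exact rank_unfold3_contract3_le B _

lemma contract3_tucker {R₁ R₂ R₃ : ℕ} (A : Matrix (Fin K') (Fin K) ℝ)
    (G : Fin R₁ → Fin R₂ → Fin R₃ → ℝ) (U : Matrix (Fin I) (Fin R₁) ℝ)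
    (V : Matrix (Fin J) (Fin R₂) ℝ) (W : Matrix (Fin K) (Fin R₃) ℝ) :
    contract3 A (tucker G U V W) = tucker G U V (A * W) := by
  funext i j k
  simp only [contract3, tucker, mul_apply, Finset.mul_sum]
  rw [Finset.sum_comm]
  refine Finset.sum_congr rfl fun p _ => ?_
  rw [Finset.sum_comm]
  refine Finset.sum_congr rfl fun q _ => ?_
  rw [Finset.sum_comm]
  exact Finset.sum_congr rfl fun r _ => Finset.sum_congr rfl fun l _ => by ring

end Contraction

theorem degraded_rank_and_recovery_general
    {I J K K_M R₁ R₂ R₃ : ℕ}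
    (G : Fin R₁ → Fin R₂ → Fin R₃ → ℝ)
    (U : Matrix (Fin I) (Fin R₁) ℝ) (V : Matrix (Fin J) (Fin R₂) ℝ)
    (W : Matrix (Fin K) (Fin R₃) ℝ)
    (P_M : Matrix (Fin K_M) (Fin K) ℝ) (hPW : (P_M * W).rank = R₃)
    (Y : Fin I → Fin J → Fin K → ℝ) (hY : Y = tucker G U V W)
    (Q : Matrix (Fin R₃) (Fin K_M) ℝ) (hQ : IsMPInv (P_M * W) Q) :
    (unfold1 (contract3 P_M Y)).rank = (unfold1 Y).rank ∧
    (unfold2 (contract3 P_M Y)).rank = (unfold2 Y).rank ∧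
    (unfold3 (contract3 P_M Y)).rank = (unfold3 Y).rank ∧
    Y = contract3 (W * Q) (contract3 P_M Y) := by
  have hQPW : Q * (P_M * W) = 1 :=
    mul_eq_one_of_mul_mul_self_eq (by rw [hPW, Fintype.card_fin]) hQ.1
  have hrecover : contract3 (W * Q) (contract3 P_M Y) = Y := by
    rw [hY, contract3_tucker, contract3_tucker, Matrix.mul_assoc, hQPW, Matrix.mul_one]
  obtain ⟨h1, h2, h3⟩ := rank_unfold_contract3_eq_of_contract3_contract3_eq hrecover
  exact ⟨h1, h2, h3, hrecover.symm⟩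

/-- If `rank(P_M W) = R₃`, the multilinear rank of `Y_M = Y ×₃ P_M` equals that of `Y`,
and `Y = Y_M ×₃ (W (P_M W)⁺)`. -/
theorem degraded_rank_and_recovery
    {I J K K_M R₁ R₂ R₃ : ℕ}
    (G : Fin R₁ → Fin R₂ → Fin R₃ → ℝ)
    (U : Matrix (Fin I) (Fin R₁) ℝ) (V : Matrix (Fin J) (Fin R₂) ℝ)
    (W : Matrix (Fin K) (Fin R₃) ℝ)
    (hU : U.rank = R₁) (hV : V.rank = R₂) (hW : W.rank = R₃)
    (P_M : Matrix (Fin K_M) (Fin K) ℝ) (hPW : (P_M * W).rank = R₃)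
    (Y : Fin I → Fin J → Fin K → ℝ) (hY : Y = tucker G U V W)
    (Q : Matrix (Fin R₃) (Fin K_M) ℝ) (hQ : IsMPInv (P_M * W) Q) :
    (unfold1 (contract3 P_M Y)).rank = (unfold1 Y).rank ∧
    (unfold2 (contract3 P_M Y)).rank = (unfold2 Y).rank ∧
    (unfold3 (contract3 P_M Y)).rank = (unfold3 Y).rank ∧
    Y = contract3 (W * Q) (contract3 P_M Y) :=
  degraded_rank_and_recovery_general G U V W P_M hPW Y hY Q hQ
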